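/- arXiv:1501.07341 — 3 statements merged into one kernel-verified Lean document; each statement's English description precedes it below -/
import Mathlib

section
/- The map f : R^2 → R^m (m ≥ 3) given by f(t,s) = (t+s, t^2+2st, t^3+3st^2, 0, …, 0) is diffeomorphic to the standard cuspidal edge g(u,w) = (u, w^2, w^3, 0, …, 0); that is, there exist diffeomorphisms σ of R^2 and τ of R^m with τ ∘ f = g ∘ σ. -/
/-- the map `f(t,s) = (t+s, t²+2st, t³+3st², 0, …, 0)` into `ℝ^m`
(`m ≥ 3`) is diffeomorphic to the standard cuspidal edge
`g(u,w) = (u, w², w³, 0, …, 0)`: there are (global) diffeomorphisms `σ` of `ℝ²`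
and `τ` of `ℝ^m` with `τ ∘ f = g ∘ σ`. -/
theorem stmt0 (m : ℕ) (hm : 3 ≤ m)
    (f : ℝ × ℝ → Fin m → ℝ)
    (hf : f = fun (p : ℝ × ℝ) (i : Fin m) => if (i : ℕ) = 0 then p.1 + p.2
      else if (i : ℕ) = 1 then p.1 ^ 2 + 2 * p.2 * p.1
      else if (i : ℕ) = 2 then p.1 ^ 3 + 3 * p.2 * p.1 ^ 2 else 0)
    (g : ℝ × ℝ → Fin m → ℝ)
    (hg : g = fun (p : ℝ × ℝ) (i : Fin m) => if (i : ℕ) = 0 then p.1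
      else if (i : ℕ) = 1 then p.2 ^ 2
      else if (i : ℕ) = 2 then p.2 ^ 3 else 0) :
    ∃ (σ σi : ℝ × ℝ → ℝ × ℝ) (τ τi : (Fin m → ℝ) → Fin m → ℝ),
      ContDiff ℝ (⊤ : ℕ∞) σ ∧ ContDiff ℝ (⊤ : ℕ∞) σi ∧ (∀ x, σi (σ x) = x) ∧ (∀ x, σ (σi x) = x) ∧
      ContDiff ℝ (⊤ : ℕ∞) τ ∧ ContDiff ℝ (⊤ : ℕ∞) τi ∧ (∀ y, τi (τ y) = y) ∧ (∀ y, τ (τi y) = y) ∧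
      ∀ p, τ (f p) = g (σ p) := by
  subst hf hg
  have h0 : 0 < m := by omega
  have h1 : 1 < m := by omega
  have h2 : 2 < m := by omega
  refine ⟨fun p => (p.1 + p.2, -p.2), fun p => (p.1 + p.2, -p.2),
    (fun y i => if (i : ℕ) = 0 then y ⟨0, h0⟩
      else if (i : ℕ) = 1 then (y ⟨0, h0⟩) ^ 2 - y ⟨1, h1⟩
      else if (i : ℕ) = 2 then
        (1/2 : ℝ) * (3 * (y ⟨0, h0⟩) * (y ⟨1, h1⟩) - y ⟨2, h2⟩ - 2 * (y ⟨0, h0⟩) ^ 3)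
      else y i),
    (fun z i => if (i : ℕ) = 0 then z ⟨0, h0⟩
      else if (i : ℕ) = 1 then (z ⟨0, h0⟩) ^ 2 - z ⟨1, h1⟩
      else if (i : ℕ) = 2 then
        -2 * z ⟨2, h2⟩ + (z ⟨0, h0⟩) ^ 3 - 3 * (z ⟨0, h0⟩) * (z ⟨1, h1⟩)
      else z i),
    ?_, ?_, ?_, ?_, ?_, ?_, ?_, ?_, ?_⟩
  · fun_prop
  · fun_prop
  · intro x; simp
  · intro x; simp
  · apply contDiff_pi.2
    intro i
    split_ifs <;> fun_prop
  · apply contDiff_pi.2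
    intro i
    split_ifs <;> fun_prop
  · intro y
    funext i
    beta_reduce
    norm_num
    split_ifs with ha hb hc
    · rw [show i = ⟨0, h0⟩ from Fin.ext ha]
    · rw [show i = ⟨1, h1⟩ from Fin.ext hb]
    · rw [show i = ⟨2, h2⟩ from Fin.ext hc]; ring
    · ring
  · intro y
    funext i
    beta_reduce
    norm_num
    split_ifs with ha hb hc
    · rw [show i = ⟨0, h0⟩ from Fin.ext ha]
    · rw [show i = ⟨1, h1⟩ from Fin.ext hb]
    · rw [show i = ⟨2, h2⟩ from Fin.ext hc]; ring
    · ring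
  · intro p
    funext i
    beta_reduce
    norm_num
    split_ifs with ha hb hc <;> ring
end

section
/- The map f : R^2 → R^3 given by f(t,s) = (t+s, t^2+2st, t^4+4st^3) is diffeomorphic to the folded umbrella normal form g(u,t) = (u, t^2+ut, t^4 + (2/3)u t^3). -/
/-- `f` (as a germ at `p`) is diffeomorphic to `g` (as a germ at `q`): there are
diffeomorphism-germs `σ` of the source and `τ` of the target with `τ ∘ f = g ∘ σ`. -/
def LocallyDiffeomorphic {E F : Type*} [NormedAddCommGroup E] [NormedSpace ℝ E]
    [NormedAddCommGroup F] [NormedSpace ℝ F]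
    (f : E → F) (p : E) (g : E → F) (q : E) : Prop :=
  ∃ (σ σi : E → E) (τ τi : F → F) (U : Set E) (W : Set F),
    IsOpen U ∧ p ∈ U ∧ IsOpen W ∧ f p ∈ W ∧
    ContDiffOn ℝ (⊤ : ℕ∞) σ U ∧ ContDiffOn ℝ (⊤ : ℕ∞) τ W ∧
    (∀ x ∈ U, σi (σ x) = x) ∧ (∀ y ∈ W, τi (τ y) = y) ∧
    ContDiffOn ℝ (⊤ : ℕ∞) σi (σ '' U) ∧ ContDiffOn ℝ (⊤ : ℕ∞) τi (τ '' W) ∧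
    σ p = q ∧ f '' U ⊆ W ∧ ∀ x ∈ U, τ (f x) = g (σ x)

/-- `f(t,s) = (t+s, t²+2st, t⁴+4st³)` is diffeomorphic (as a germ
at the origin) to the folded umbrella `g(u,t) = (u, t²+ut, t⁴+(2/3)ut³)`. -/
theorem stmt1
    (f : ℝ × ℝ → ℝ × ℝ × ℝ)
    (hf : f = fun p => (p.1 + p.2, p.1 ^ 2 + 2 * p.2 * p.1, p.1 ^ 4 + 4 * p.2 * p.1 ^ 3))
    (g : ℝ × ℝ → ℝ × ℝ × ℝ)
    (hg : g = fun p => (p.1, p.2 ^ 2 + p.1 * p.2, p.2 ^ 4 + (2 / 3) * p.1 * p.2 ^ 3)) :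
    LocallyDiffeomorphic f 0 g 0 := by
  subst hf hg
  refine ⟨fun p => (p.1 + p.2, (-(1:ℝ)/2) * p.1), fun p => (-2 * p.2, p.1 + 2 * p.2),
    fun y => (y.1, (-(1:ℝ)/4) * y.2.1, (-(1:ℝ)/48) * y.2.2),
    fun y => (y.1, -4 * y.2.1, -48 * y.2.2),
    Set.univ, Set.univ, isOpen_univ, trivial, isOpen_univ, trivial,
    ?_, ?_, ?_, ?_, ?_, ?_, ?_, ?_, ?_⟩
  · exact (by fun_prop : ContDiff ℝ (⊤ : ℕ∞) _).contDiffOn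
  · exact (by fun_prop : ContDiff ℝ (⊤ : ℕ∞) _).contDiffOn
  · rintro ⟨t, u⟩ _; simp only [Prod.mk.injEq]; constructor <;> ring
  · rintro ⟨a, b, c⟩ _; simp only [Prod.mk.injEq]; refine ⟨by trivial, by ring, by ring⟩
  · exact (by fun_prop : ContDiff ℝ (⊤ : ℕ∞) _).contDiffOn
  · exact (by fun_prop : ContDiff ℝ (⊤ : ℕ∞) _).contDiffOn
  · simp [Prod.ext_iff]
  · exact fun _ _ => trivial
  · intro x _
    simp only [Prod.mk.injEq]
    refine ⟨trivial, by ring, by ring⟩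
end

section
/- The map f : R² → R³, f(t,s) = (−2ts − t², s + t, (1/3)t s⁴), is diffeomorphic (as a germ at the origin) to the (2,5)-cuspidal edge (u,w) ↦ (u, w², w⁵). -/
/-- `f(t,s) = (−2ts − t², s + t, (1/3)t s⁴)` is diffeomorphic, as a
germ at the origin, to the (2,5)-cuspidal edge `(u,w) ↦ (u, w², w⁵)`. -/
theorem stmt18
    (f : ℝ × ℝ → ℝ × ℝ × ℝ)
    (hf : f = fun p => (-2 * p.1 * p.2 - p.1 ^ 2, p.2 + p.1, (1 / 3) * p.1 * p.2 ^ 4))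
    (g : ℝ × ℝ → ℝ × ℝ × ℝ)
    (hg : g = fun p => (p.1, p.2 ^ 2, p.2 ^ 5)) :
    LocallyDiffeomorphic f 0 g 0 := by
  refine ⟨fun p => (p.2 + p.1, p.2), fun p => (p.1 - p.2, p.2),
    fun q => (q.2.1, q.1 + q.2.1 ^ 2, q.2.1 * (q.1 + q.2.1 ^ 2) ^ 2 - 3 * q.2.2),
    fun q => (q.2.1 - q.1 ^ 2, q.1, (q.1 * q.2.1 ^ 2 - q.2.2) * (1 / 3)),
    Set.univ, Set.univ, isOpen_univ, trivial, isOpen_univ, trivial,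
    ?_, ?_, ?_, ?_, ?_, ?_, ?_, ?_, ?_⟩
  · exact (by fun_prop : ContDiff ℝ (⊤ : ℕ∞) _).contDiffOn
  · exact (by fun_prop : ContDiff ℝ (⊤ : ℕ∞) _).contDiffOn
  · intro x _
    exact Prod.ext (by ring) rfl
  · intro y _
    exact Prod.ext (by ring) (Prod.ext rfl (by ring))
  · exact (by fun_prop : ContDiff ℝ (⊤ : ℕ∞) _).contDiffOn
  · exact (by fun_prop : ContDiff ℝ (⊤ : ℕ∞) _).contDiffOn
  · simp
  · exact Set.subset_univ _
  · intro x _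
    subst hf hg
    exact Prod.ext rfl (Prod.ext (by ring) (by ring))
end
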